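/- Let n, d ≥ 1 be integers and let J⁽¹⁾, …, J⁽ᵈ⁾ be real 2n×2n matrices. For j ∈ {1, …, 2n} define Ṽ_j f(v, z) = (∂f/∂v_j)(v, z) + (1/2) Σ_{i=1}^{d} ⟨v, J⁽ⁱ⁾ e_j⟩ (∂f/∂z_i)(v, z) for Schwartz f on ℝ^{2n} × ℝ^d, and the sub-Laplacian 𝓛 f = −Σ_{j=1}^{2n} Ṽ_j(Ṽ_j f). For a unit vector ω ∈ ℝ^d define R_ω f(v, t) = ∫_{ω^⊥} f(v, tω + z′) dσ(z′), where σ is Lebesgue measure on the hyperplane ω^⊥ = {z ∈ ℝ^d : ⟨z, ω⟩ = 0}; and on functions g(v, t) on ℝ^{2n} × ℝ define V_j^ω g = ∂g/∂v_j + (1/2)(Σ_{i=1}^{d} ω_i ⟨v, J⁽ⁱ⁾ e_j⟩) ∂g/∂t and 𝓛^ω g = −Σ_{j=1}^{2n} V_j^ω(V_j^ω g). Then for every Schwartz f, R_ω(𝓛 f) = 𝓛^ω (R_ω f). -/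

import Mathlib

/-!
Put `Φ c = ∫_{ω^⊥} f (c + z′) dz′`, so that `R_ω f = Φ ∘ L` with `L (v, t) = (v, tω)`. The
coefficients of `Ṽ_j` depend on `v` only, so they are constant on the fibres of `R_ω`, and
differentiating under the integral sign (legitimate because `f` is Schwartz) gives
`R_ω (Ṽ_j f) (v, t) = DΦ (v, tω) (e_j, ½[v, e_j])`. Translation invariance of Lebesgue measure on
`ω^⊥` makes `DΦ` vanish on `ω^⊥`, so of the central direction `½[v, e_j]` only its component
`⟨½[v, e_j], ω⟩ ω` survives, which is exactly `V_j^ω (R_ω f)`. Since `Ṽ_j` preserves Schwartz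
space, this can be applied twice and summed over `j`.
-/

open MeasureTheory Matrix

/-- The left-invariant vector field `Ṽ_j` on `ℝ^{2n} × ℝ^d`:
`Ṽ_j f(v,z) = ∂f/∂v_j + (1/2) Σ_i ⟨v, J⁽ⁱ⁾e_j⟩ ∂f/∂z_i`. -/
noncomputable def Vtilde (n d : ℕ) (J : Fin d → Matrix (Fin (2 * n)) (Fin (2 * n)) ℝ)
    (j : Fin (2 * n)) (f : (Fin (2 * n) → ℝ) × EuclideanSpace ℝ (Fin d) → ℝ)
    (x : (Fin (2 * n) → ℝ) × EuclideanSpace ℝ (Fin d)) : ℝ :=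
  fderiv ℝ f x (Pi.single j 1, 0) +
    (1 / 2) * ∑ i : Fin d,
      (x.1 ⬝ᵥ (J i *ᵥ Pi.single j 1)) * fderiv ℝ f x (0, EuclideanSpace.single i 1)

/-- The sub-Laplacian `𝓛 = −Σ_j Ṽ_j²`. -/
noncomputable def subLaplacian (n d : ℕ)
    (J : Fin d → Matrix (Fin (2 * n)) (Fin (2 * n)) ℝ)
    (f : (Fin (2 * n) → ℝ) × EuclideanSpace ℝ (Fin d) → ℝ)
    (x : (Fin (2 * n) → ℝ) × EuclideanSpace ℝ (Fin d)) : ℝ :=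
  -∑ j : Fin (2 * n), Vtilde n d J j (Vtilde n d J j f) x

/-- The partial Radon transform in the central variable:
`R_ω f(v, t) = ∫_{ω^⊥} f(v, tω + z′) dσ(z′)` with `σ` Lebesgue measure on the
hyperplane `ω^⊥`. -/
noncomputable def Radon (n d : ℕ) (ω : EuclideanSpace ℝ (Fin d))
    (f : (Fin (2 * n) → ℝ) × EuclideanSpace ℝ (Fin d) → ℝ)
    (x : (Fin (2 * n) → ℝ) × ℝ) : ℝ :=
  ∫ z' : (ℝ ∙ ω)ᗮ, f (x.1, x.2 • ω + (z' : EuclideanSpace ℝ (Fin d)))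

/-- The vector field `V_j^ω = ∂/∂v_j + (1/2)(Σ_i ω_i ⟨v, J⁽ⁱ⁾e_j⟩) ∂/∂t`
on functions of `(v, t) ∈ ℝ^{2n} × ℝ`. -/
noncomputable def Vomega (n d : ℕ) (J : Fin d → Matrix (Fin (2 * n)) (Fin (2 * n)) ℝ)
    (ω : EuclideanSpace ℝ (Fin d)) (j : Fin (2 * n))
    (g : (Fin (2 * n) → ℝ) × ℝ → ℝ) (x : (Fin (2 * n) → ℝ) × ℝ) : ℝ :=
  fderiv ℝ g x (Pi.single j 1, 0) +
    (1 / 2) * (∑ i : Fin d, ω i * (x.1 ⬝ᵥ (J i *ᵥ Pi.single j 1))) *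
      fderiv ℝ g x (0, 1)

/-- The sub-Laplacian `𝓛^ω = −Σ_j (V_j^ω)²` on the quotient group `G_ω ≅ ℍⁿ`. -/
noncomputable def subLaplacianOmega (n d : ℕ)
    (J : Fin d → Matrix (Fin (2 * n)) (Fin (2 * n)) ℝ)
    (ω : EuclideanSpace ℝ (Fin d)) (g : (Fin (2 * n) → ℝ) × ℝ → ℝ)
    (x : (Fin (2 * n) → ℝ) × ℝ) : ℝ :=
  -∑ j : Fin (2 * n), Vomega n d J ω j (Vomega n d J ω j g) x

open SchwartzMap

section Fibre

variable {W : Type*} [NormedAddCommGroup W] [NormedSpace ℝ W]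
  {G : Type*} [NormedAddCommGroup G] [NormedSpace ℝ G]
  {F : Type*} [NormedAddCommGroup F] [NormedSpace ℝ F]

theorem one_add_norm_le_of_isometry (ι : W →ₗᵢ[ℝ] G) (c : G) (z : W) :
    1 + ‖z‖ ≤ (1 + ‖c‖) * (1 + ‖c + ι z‖) := by
  have h : ‖z‖ ≤ ‖c + ι z‖ + ‖c‖ := by
    simpa [ι.norm_map] using norm_sub_le (c + ι z) c
  nlinarith [norm_nonneg c, norm_nonneg (c + ι z)]

variable [FiniteDimensional ℝ W] [MeasurableSpace W] [BorelSpace W] (μ : Measure W)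

theorem integrable_comp_add_isometry [μ.HasTemperateGrowth] (g : 𝓢(G, F)) (c : G)
    (ι : W →ₗᵢ[ℝ] G) : Integrable (fun z => g (c + ι z)) μ :=
  (compCLMOfAntilipschitz ℝ (g := fun z => c + ι z)
    ((Function.HasTemperateGrowth.const c).add ι.toContinuousLinearMap.hasTemperateGrowth)
    ((IsometryEquiv.addLeft c).isometry.comp ι.isometry).antilipschitz g).integrable

theorem hasFDerivAt_integral_comp_add_isometry [μ.HasTemperateGrowth] [CompleteSpace F]
    (g : 𝓢(G, F)) (ι : W →ₗᵢ[ℝ] G) (c₀ : G) :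
    HasFDerivAt (fun c => ∫ z, g (c + ι z) ∂μ) (∫ z, fderiv ℝ g (c₀ + ι z) ∂μ) c₀ := by
  set k := μ.integrablePower
  set S := 2 ^ k * (Finset.Iic (k, 1)).sup (fun m => SchwartzMap.seminorm ℝ m.1 m.2) g
  have decay (y : G) : (1 + ‖y‖) ^ k * ‖fderiv ℝ g y‖ ≤ S := by
    simpa [norm_iteratedFDeriv_one] using
      one_add_le_sup_seminorm_apply (𝕜 := ℝ) (m := (k, 1)) le_rfl le_rfl g y
  have bound : ∀ z, ∀ c ∈ Metric.ball c₀ 1,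
      ‖fderiv ℝ g (c + ι z)‖ ≤ (2 + ‖c₀‖) ^ k * S * (1 + ‖z‖) ^ (-(k : ℝ)) := by
    intro z c hc
    have hc : 1 + ‖c‖ ≤ 2 + ‖c₀‖ := by
      have := norm_le_norm_add_norm_sub' c c₀
      rw [mem_ball_iff_norm] at hc
      linarith
    rw [Real.rpow_neg (by positivity), Real.rpow_natCast, ← div_eq_mul_inv,
      le_div_iff₀ (by positivity)]
    calc ‖fderiv ℝ g (c + ι z)‖ * (1 + ‖z‖) ^ k
        ≤ ‖fderiv ℝ g (c + ι z)‖ * ((2 + ‖c₀‖) * (1 + ‖c + ι z‖)) ^ k := by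
          gcongr
          exact (one_add_norm_le_of_isometry ι c z).trans (by gcongr)
      _ = (2 + ‖c₀‖) ^ k * ((1 + ‖c + ι z‖) ^ k * ‖fderiv ℝ g (c + ι z)‖) := by
          rw [mul_pow]; ring
      _ ≤ (2 + ‖c₀‖) ^ k * S := by gcongr; exact decay _
  refine hasFDerivAt_integral_of_dominated_of_fderiv_le (Metric.ball_mem_nhds c₀ one_pos)
    (.of_forall fun c => (integrable_comp_add_isometry μ g c ι).aestronglyMeasurable)
    (integrable_comp_add_isometry μ g c₀ ι)
    (integrable_comp_add_isometry μ (fderivCLM ℝ G F g) c₀ ι).aestronglyMeasurable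
    (.of_forall bound) ((μ.integrable_pow_neg_integrablePower).const_mul _)
    (.of_forall fun z c _ => ?_)
  exact (g.hasFDerivAt (c + ι z)).comp c ((hasFDerivAt_id c).add_const (ι z))

theorem fderiv_integral_comp_add_isometry_apply_isometry [μ.HasTemperateGrowth]
    [μ.IsAddLeftInvariant] [CompleteSpace F] (g : 𝓢(G, F)) (ι : W →ₗᵢ[ℝ] G) (c : G) (u : W) :
    fderiv ℝ (fun c => ∫ z, g (c + ι z) ∂μ) c (ι u) = 0 := by
  set Φ := fun c => ∫ z, g (c + ι z) ∂μ
  have invariant (t : ℝ) : Φ (c + t • ι u) = Φ c := by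
    simp only [Φ]
    conv_rhs => rw [← integral_add_left_eq_self _ (t • u)]
    simp only [map_add, map_smul, add_assoc]
  have h := (hasFDerivAt_integral_comp_add_isometry μ g ι c).differentiableAt.hasFDerivAt
    |>.hasLineDerivAt (ι u)
  rw [HasLineDerivAt, funext invariant] at h
  exact h.unique (hasDerivAt_const _ _)

end Fibre

section Radon

open RealInnerProductSpace

variable {n d : ℕ} (ω : EuclideanSpace ℝ (Fin d))

noncomputable def inrOrthogonal :
    (ℝ ∙ ω)ᗮ →ₗᵢ[ℝ] (Fin (2 * n) → ℝ) × EuclideanSpace ℝ (Fin d) where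
  toLinearMap := (LinearMap.inr ℝ _ _).comp (ℝ ∙ ω)ᗮ.subtype
  norm_map' z := by simp [Prod.norm_def]

@[simp]
theorem inrOrthogonal_apply (z : (ℝ ∙ ω)ᗮ) :
    inrOrthogonal (n := n) ω z = (0, (z : EuclideanSpace ℝ (Fin d))) := rfl

noncomputable def prodMapToSpanSingleton :
    (Fin (2 * n) → ℝ) × ℝ →L[ℝ] (Fin (2 * n) → ℝ) × EuclideanSpace ℝ (Fin d) :=
  (ContinuousLinearMap.id ℝ _).prodMap (ContinuousLinearMap.toSpanSingleton ℝ ω)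

@[simp]
theorem prodMapToSpanSingleton_apply (x : (Fin (2 * n) → ℝ) × ℝ) :
    prodMapToSpanSingleton ω x = (x.1, x.2 • ω) := rfl

theorem Radon_eq_comp (f : (Fin (2 * n) → ℝ) × EuclideanSpace ℝ (Fin d) → ℝ) :
    Radon n d ω f = (fun c => ∫ z, f (c + inrOrthogonal ω z)) ∘ prodMapToSpanSingleton ω := by
  ext x
  simp [Radon]

theorem Radon_fderiv_apply (hω : ‖ω‖ = 1)
    (f : 𝓢((Fin (2 * n) → ℝ) × EuclideanSpace ℝ (Fin d), ℝ))
    (a : (Fin (2 * n) → ℝ) → Fin (2 * n) → ℝ) (b : (Fin (2 * n) → ℝ) → EuclideanSpace ℝ (Fin d)) :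
    Radon n d ω (fun y => fderiv ℝ f y (a y.1, b y.1)) =
      fun x => fderiv ℝ (Radon n d ω f) x (a x.1, ⟪b x.1, ω⟫) := by
  ext x
  set Φ := fun c => ∫ z, f (c + inrOrthogonal ω z)
  set L := prodMapToSpanSingleton (n := n) ω
  have hΦ := hasFDerivAt_integral_comp_add_isometry volume f (inrOrthogonal ω) (L x)
  have hperp : b x.1 - ⟪b x.1, ω⟫ • ω ∈ (ℝ ∙ ω)ᗮ := by
    rw [Submodule.mem_orthogonal_singleton_iff_inner_right, inner_sub_right, inner_smul_right,
      real_inner_self_eq_norm_sq, hω, real_inner_comm]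
    ring
  have hsplit : (a x.1, b x.1) = L (a x.1, ⟪b x.1, ω⟫) + inrOrthogonal ω ⟨_, hperp⟩ := by
    simp [L]
  calc Radon n d ω (fun y => fderiv ℝ f y (a y.1, b y.1)) x
      = (∫ z, fderiv ℝ f (L x + inrOrthogonal ω z)) (a x.1, b x.1) := by
        have hint : Integrable (fun z => fderiv ℝ f (L x + inrOrthogonal ω z)) :=
          integrable_comp_add_isometry volume (fderivCLM ℝ _ ℝ f) _ _
        rw [ContinuousLinearMap.integral_apply hint]
        simp [Radon, L]
    _ = fderiv ℝ Φ (L x) (L (a x.1, ⟪b x.1, ω⟫)) := by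
        rw [← hΦ.fderiv, hsplit, map_add,
          fderiv_integral_comp_add_isometry_apply_isometry, add_zero]
    _ = fderiv ℝ (Radon n d ω f) x (a x.1, ⟪b x.1, ω⟫) := by
        rw [Radon_eq_comp, (hΦ.differentiableAt.hasFDerivAt.comp x L.hasFDerivAt).fderiv]
        rfl

theorem integrable_Radon_integrand (g : 𝓢((Fin (2 * n) → ℝ) × EuclideanSpace ℝ (Fin d), ℝ))
    (x : (Fin (2 * n) → ℝ) × ℝ) :
    Integrable (fun z : (ℝ ∙ ω)ᗮ => g (x.1, x.2 • ω + (z : EuclideanSpace ℝ (Fin d)))) := by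
  simpa using integrable_comp_add_isometry volume g (prodMapToSpanSingleton ω x) (inrOrthogonal ω)

end Radon

section Bracket

open RealInnerProductSpace

variable {m d : ℕ} (J : Fin d → Matrix (Fin m) (Fin m) ℝ)

/-- The Lie bracket `[v, w] ∈ 𝔷`, characterised by `⟨Z_i, [v, w]⟩ = ⟨v, J⁽ⁱ⁾ w⟩`. -/
noncomputable def bracket (v w : Fin m → ℝ) : EuclideanSpace ℝ (Fin d) :=
  ∑ i, (v ⬝ᵥ (J i *ᵥ w)) • EuclideanSpace.single i 1

theorem inner_bracket_left (v w : Fin m → ℝ) (ω : EuclideanSpace ℝ (Fin d)) :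
    ⟪bracket J v w, ω⟫ = ∑ i, ω i * (v ⬝ᵥ (J i *ᵥ w)) := by
  simp [bracket, sum_inner, inner_smul_left, EuclideanSpace.inner_single_left, mul_comm]

theorem hasTemperateGrowth_fst_dotProduct (E : Type*) [NormedAddCommGroup E] [NormedSpace ℝ E]
    (w : Fin m → ℝ) : (fun y : (Fin m → ℝ) × E => y.1 ⬝ᵥ w).HasTemperateGrowth :=
  (((dotProductBilin ℝ ℝ).flip w).toContinuousLinearMap.comp
    (ContinuousLinearMap.fst ℝ _ E)).hasTemperateGrowth

end Bracket

section VectorFields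

open RealInnerProductSpace LineDeriv

variable {n d : ℕ} (J : Fin d → Matrix (Fin (2 * n)) (Fin (2 * n)) ℝ) (j : Fin (2 * n))

theorem Vtilde_apply_eq_fderiv (f : (Fin (2 * n) → ℝ) × EuclideanSpace ℝ (Fin d) → ℝ)
    (y : (Fin (2 * n) → ℝ) × EuclideanSpace ℝ (Fin d)) :
    Vtilde n d J j f y =
      fderiv ℝ f y (Pi.single j 1, (1 / 2 : ℝ) • bracket J y.1 (Pi.single j 1)) := by
  rw [← (fderiv ℝ f y).comp_inl_add_comp_inr]
  simp [Vtilde, bracket, map_sum, map_smul]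

theorem Vomega_apply_eq_fderiv (ω : EuclideanSpace ℝ (Fin d)) (g : (Fin (2 * n) → ℝ) × ℝ → ℝ)
    (x : (Fin (2 * n) → ℝ) × ℝ) :
    Vomega n d J ω j g x =
      fderiv ℝ g x (Pi.single j 1, ⟪(1 / 2 : ℝ) • bracket J x.1 (Pi.single j 1), ω⟫) := by
  have hsplit (s : ℝ) :
      ((Pi.single j 1, s) : (Fin (2 * n) → ℝ) × ℝ) = (Pi.single j 1, 0) + s • (0, 1) := by
    simp
  rw [real_inner_smul_left, inner_bracket_left, hsplit, map_add, map_smul, smul_eq_mul, Vomega]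

theorem exists_schwartzMap_coe_eq_Vtilde
    (f : 𝓢((Fin (2 * n) → ℝ) × EuclideanSpace ℝ (Fin d), ℝ)) :
    ∃ g : 𝓢((Fin (2 * n) → ℝ) × EuclideanSpace ℝ (Fin d), ℝ), ⇑g = Vtilde n d J j f := by
  let E := (Fin (2 * n) → ℝ) × EuclideanSpace ℝ (Fin d)
  refine ⟨∂_{((Pi.single j 1, 0) : E)} f + (1 / 2 : ℝ) • ∑ i, smulLeftCLM ℝ
    (fun y : E => y.1 ⬝ᵥ (J i *ᵥ Pi.single j 1)) (∂_{((0, EuclideanSpace.single i 1) : E)} f), ?_⟩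
  ext y
  simp only [Vtilde, _root_.add_apply, _root_.smul_apply, _root_.sum_apply,
    lineDerivOp_apply_eq_fderiv, smul_eq_mul]
  congr 2
  refine Finset.sum_congr rfl fun i _ => ?_
  rw [smulLeftCLM_apply_apply (hasTemperateGrowth_fst_dotProduct _ _), smul_eq_mul,
    lineDerivOp_apply_eq_fderiv]

theorem Radon_Vtilde {ω : EuclideanSpace ℝ (Fin d)} (hω : ‖ω‖ = 1)
    (f : 𝓢((Fin (2 * n) → ℝ) × EuclideanSpace ℝ (Fin d), ℝ)) :
    Radon n d ω (Vtilde n d J j f) = Vomega n d J ω j (Radon n d ω f) := by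
  rw [funext (Vtilde_apply_eq_fderiv J j f), Radon_fderiv_apply ω hω f (fun _ => Pi.single j 1)
    (fun v => (1 / 2 : ℝ) • bracket J v (Pi.single j 1))]
  exact funext fun x => (Vomega_apply_eq_fderiv J j ω _ x).symm

end VectorFields

theorem radon_intertwines_subLaplacian_general (n d : ℕ)
    (J : Fin d → Matrix (Fin (2 * n)) (Fin (2 * n)) ℝ)
    (ω : EuclideanSpace ℝ (Fin d)) (hω : ‖ω‖ = 1)
    (f : SchwartzMap ((Fin (2 * n) → ℝ) × EuclideanSpace ℝ (Fin d)) ℝ) :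
    Radon n d ω (subLaplacian n d J ⇑f) =
      subLaplacianOmega n d J ω (Radon n d ω ⇑f) := by
  choose g hg using fun j => exists_schwartzMap_coe_eq_Vtilde J j f
  choose h hh using fun j => exists_schwartzMap_coe_eq_Vtilde J j (g j)
  have radon_square (j : Fin (2 * n)) :
      Radon n d ω (Vtilde n d J j (Vtilde n d J j f)) =
        Vomega n d J ω j (Vomega n d J ω j (Radon n d ω f)) := by
    rw [← hg, Radon_Vtilde J j hω, hg, Radon_Vtilde J j hω]
  have integrable (x : (Fin (2 * n) → ℝ) × ℝ) (j : Fin (2 * n)) :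
      Integrable fun z : (ℝ ∙ ω)ᗮ => Vtilde n d J j (Vtilde n d J j f) (x.1, x.2 • ω + z) := by
    simpa only [← hg, ← hh] using integrable_Radon_integrand ω (h j) x
  ext x
  simp only [Radon, subLaplacian, subLaplacianOmega]
  rw [integral_neg, integral_finsetSum _ fun j _ => integrable x j]
  exact congrArg _ (Finset.sum_congr rfl fun j _ => congrFun (radon_square j) x)

/-- Lemma 2.6 (1): the partial Radon transform intertwines the sub-Laplacian `𝓛` on `G`
with the sub-Laplacian `𝓛^ω` on `G_ω`: `R_ω(𝓛 f) = 𝓛^ω(R_ω f)`. -/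
theorem radon_intertwines_subLaplacian (n d : ℕ) (hn : 1 ≤ n) (hd : 1 ≤ d)
    (J : Fin d → Matrix (Fin (2 * n)) (Fin (2 * n)) ℝ)
    (ω : EuclideanSpace ℝ (Fin d)) (hω : ‖ω‖ = 1)
    (f : SchwartzMap ((Fin (2 * n) → ℝ) × EuclideanSpace ℝ (Fin d)) ℝ) :
    Radon n d ω (subLaplacian n d J ⇑f) =
      subLaplacianOmega n d J ω (Radon n d ω ⇑f) :=
  radon_intertwines_subLaplacian_general n d J ω hω f
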